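/- Let ε ∈ (0,1], β = √(1 + 3ε/2) − √(1 + ε), and let k > 0 be a real number. For any real t with 0 ≤ t ≤ k, we have t + 2β√(k·t) + β²·k ≤ (1 + ε/2)·k. -/
import Mathlib


set_option maxHeartbeats 1000000 in
theorem stmt_2 (ε : ℝ) (hε0 : 0 < ε) (hε1 : ε ≤ 1)
    (β : ℝ) (hβ : β = Real.sqrt (1 + 3 * ε / 2) - Real.sqrt (1 + ε))
    (k : ℝ) (hk : 0 < k) (t : ℝ) (ht0 : 0 ≤ t) (htk : t ≤ k) :
    t + 2 * β * Real.sqrt (k * t) + β ^ 2 * k ≤ (1 + ε / 2) * k := by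
  have h2 : (0:ℝ) ≤ 1 + ε / 2 := by linarith
  have h3 : (0:ℝ) ≤ 1 + ε := by linarith
  have h4 : (0:ℝ) ≤ 1 + 3 * ε / 2 := by linarith
  set a := Real.sqrt (1 + ε / 2) with ha
  set b := Real.sqrt (1 + ε) with hb
  set c := Real.sqrt (1 + 3 * ε / 2) with hc
  have ha2 : a ^ 2 = 1 + ε / 2 := Real.sq_sqrt h2
  have hb2 : b ^ 2 = 1 + ε := Real.sq_sqrt h3
  have hc2 : c ^ 2 = 1 + 3 * ε / 2 := Real.sq_sqrt h4
  have ha0 : 0 ≤ a := Real.sqrt_nonneg _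
  have hb0 : 0 ≤ b := Real.sqrt_nonneg _
  have hc0 : 0 ≤ c := Real.sqrt_nonneg _
  have hcb : b ≤ c := Real.sqrt_le_sqrt (by linarith)
  have hβ0 : 0 ≤ β := by rw [hβ]; linarith
  have hcab : c ≤ a * b := by
    rw [hc, ha, hb, ← Real.sqrt_mul h2]
    exact Real.sqrt_le_sqrt (by nlinarith)
  have hsq : (c + 1) ^ 2 ≤ (a + b) ^ 2 := by nlinarith
  have hcb1 : c + 1 ≤ a + b := by nlinarith [hsq, hc0, ha0, hb0]
  have hkey : 1 + β ≤ a := by rw [hβ]; linarith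
  set r := Real.sqrt k with hr
  set s := Real.sqrt t with hs
  have hr2 : r ^ 2 = k := Real.sq_sqrt hk.le
  have hs2 : s ^ 2 = t := Real.sq_sqrt ht0
  have hr0 : 0 ≤ r := Real.sqrt_nonneg _
  have hs0 : 0 ≤ s := Real.sqrt_nonneg _
  have hsr : s ≤ r := Real.sqrt_le_sqrt htk
  have hmul : Real.sqrt (k * t) = r * s := Real.sqrt_mul hk.le t
  have h5 : s + β * r ≤ a * r := by
    have := mul_le_mul_of_nonneg_right hkey hr0
    nlinarith
  have h6 : (s + β * r) ^ 2 ≤ (a * r) ^ 2 :=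
    pow_le_pow_left₀ (by positivity) h5 2
  rw [hmul, ← hs2, ← hr2, ← ha2]
  nlinarith [h6]
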